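/- Let κ have uncountable cofinality, X ⊆ [ω]^ω with X ∪ Fin κ-concentrated on Fin, and φ : X ∪ Fin → [ω]^ω continuous. Then there is A ⊆ X with |A| < κ such that the semifilter generated by φ[(X ∖ A) ∪ Fin] (all b ∈ [ω]^ω almost containing some element of the image) is neither an ultrafilter nor all of [ω]^ω; equivalently, there are disjoint infinite a, b ⊆ ω such that every y in the image meets both a and b infinitely. -/

import Mathlib

open Set Cardinal

/-- The finite subsets of ω, as a subset of Cantor space `ℕ → Bool`. -/
def FinS : Set (ℕ → Bool) := {x | {n | x n = true}.Finite}

/-!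
`Fin` is countable, so we may list it as `e 0, e 1, …`. By continuity, each requirement
"`φ (e i)` has two elements `k₁ < k₂` above `n`" holds on a neighbourhood `V` of `e i`. Meeting
the countably many requirements `t = ⟨i, n⟩` one after the other with `p 0 < q 0 < p 1 < q 1 < ⋯`
puts the `k₁`'s into `a = range p` and the `k₂`'s into `b = range q`. Every point lying in the
`G_δ` set `⋂ₙ ⋃_{t ≥ n} V t ⊇ Fin` then has its image meeting `a` and `b` infinitely, and by
`κ`-concentration only `< κ` points of `X` lie outside it, as `cf κ > ω`.
-/

universe u

namespace Cardinal

theorem mk_iUnion_lt_of_aleph0_lt_cof {ι α : Type u} [Countable ι] {κ : Cardinal}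
    (hκ : ℵ₀ < κ.ord.cof) {f : ι → Set α} (hf : ∀ i, #(f i) < κ) : #(⋃ i, f i) < κ := by
  have hι : #ι < κ.ord.cof := mk_le_aleph0.trans_lt hκ
  exact (mk_iUnion_le f).trans_lt <| mul_lt_of_lt (hκ.le.trans (Ordinal.cof_ord_le κ))
    (hι.trans_le (Ordinal.cof_ord_le κ)) (iSup_lt_of_lt_cof_ord hι hf)

/-- A set `κ`-concentrated on `D` stays `κ`-concentrated on `D` with respect to `G_δ` sets. -/
theorem mk_diff_iInter_lt {ι α : Type u} [Countable ι] [TopologicalSpace α] {κ : Cardinal}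
    (hκ : ℵ₀ < κ.ord.cof) {S D : Set α} (hconc : ∀ U, IsOpen U → D ⊆ U → #(S \ U : Set α) < κ)
    {U : ι → Set α} (hU : ∀ i, IsOpen (U i)) (hDU : ∀ i, D ⊆ U i) :
    #(S \ ⋂ i, U i : Set α) < κ := by
  rw [sdiff_iInter]
  exact mk_iUnion_lt_of_aleph0_lt_cof hκ fun i => hconc (U i) (hU i) (hDU i)

end Cardinal

theorem finS_countable : FinS.Countable := by
  exact (countable_range fun s : Finset ℕ => fun n => decide (n ∈ s)).mono
    fun x (hx : {n | x n = true}.Finite) => mem_range.2 ⟨hx.toFinset, funext fun n => by simp⟩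

theorem exists_interleaved {P : ℕ → ℕ → ℕ → Prop}
    (h : ∀ t M, ∃ k₁ k₂, M < k₁ ∧ k₁ < k₂ ∧ P t k₁ k₂) :
    ∃ p q : ℕ → ℕ, (∀ t, p t < q t) ∧ (∀ t, q t < p (t + 1)) ∧ ∀ t, P t (p t) (q t) := by
  choose f g hMf hfg hP using h
  let m : ℕ → ℕ := fun t => Nat.rec 0 (fun t mt => g t mt) t
  exact ⟨fun t => f t (m t), fun t => g t (m t), fun t => hfg _ _, fun t => hMf (t + 1) _,
    fun t => hP _ _⟩

theorem disjoint_range_of_interleaved {p q : ℕ → ℕ} (hpq : ∀ t, p t < q t)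
    (hqp : ∀ t, q t < p (t + 1)) : Disjoint (range p) (range q) := by
  have hp : StrictMono p := strictMono_nat_of_lt_succ fun t => (hpq t).trans (hqp t)
  have hq : StrictMono q := strictMono_nat_of_lt_succ fun t => (hqp t).trans (hpq _)
  rw [disjoint_left]
  rintro _ ⟨t, rfl⟩ ⟨s, hst⟩
  rcases lt_or_ge s t with hs | hs
  · exact (hqp s).not_ge (hst ▸ hp.monotone hs)
  · exact (hpq t).not_ge (hst ▸ hq.monotone hs)

theorem infinite_inter_range_of_frequently {p : ℕ → ℕ} (hp : StrictMono p) {s : Set ℕ}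
    (h : ∃ᶠ t in Filter.atTop, p t ∈ s) : (s ∩ range p).Infinite :=
  Nat.frequently_atTop_iff_infinite.1 <|
    hp.tendsto_atTop.frequently (h.mono fun t ht => ⟨ht, t, rfl⟩)

section ContinuousOn

variable {α : Type*} [TopologicalSpace α] {S : Set α} {φ : α → ℕ → Bool}

theorem ContinuousWithinAt.exists_gt_eventually_apply {s : α} (hφ : ContinuousWithinAt φ S s)
    (hinf : {k | φ s k = true}.Infinite) (M : ℕ) :
    ∃ k₁ k₂, M < k₁ ∧ k₁ < k₂ ∧ ∀ᶠ x in nhdsWithin s S, φ x k₁ = true ∧ φ x k₂ = true := by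
  have hev : ∀ k, ∀ᶠ x in nhdsWithin s S, φ x k = φ s k := fun k => by
    have := (continuous_apply k).continuousAt.comp_continuousWithinAt hφ
    rwa [ContinuousWithinAt, nhds_discrete, Filter.tendsto_pure] at this
  obtain ⟨k₁, hk₁, hMk₁⟩ := hinf.exists_gt M
  obtain ⟨k₂, hk₂, hk₁k₂⟩ := hinf.exists_gt k₁
  refine ⟨k₁, k₂, hMk₁, hk₁k₂, ?_⟩
  filter_upwards [hev k₁, hev k₂] with x hx₁ hx₂
  exact ⟨hx₁.trans hk₁, hx₂.trans hk₂⟩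

theorem ContinuousOn.exists_disjoint_infinite_on_iInter (hφ : ContinuousOn φ S) (e : ℕ → α)
    (heS : ∀ i, e i ∈ S) (hinf : ∀ i, {k | φ (e i) k = true}.Infinite) :
    ∃ a b : Set ℕ, a.Infinite ∧ b.Infinite ∧ Disjoint a b ∧
      ∃ U : ℕ → Set α, (∀ n, IsOpen (U n)) ∧ (∀ n, range e ⊆ U n) ∧
        ∀ x ∈ S ∩ ⋂ n, U n,
          ({k | φ x k = true} ∩ a).Infinite ∧ ({k | φ x k = true} ∩ b).Infinite := by
  obtain ⟨p, q, hpq, hqp, hP⟩ := exists_interleaved fun t =>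
    (hφ _ (heS (Nat.unpair t).1)).exists_gt_eventually_apply (hinf _)
  have hp : StrictMono p := strictMono_nat_of_lt_succ fun t => (hpq t).trans (hqp t)
  have hq : StrictMono q := strictMono_nat_of_lt_succ fun t => (hqp t).trans (hpq _)
  choose V hVo hVe hV using fun t => mem_nhdsWithin.1 (hP t)
  refine ⟨range p, range q, infinite_range_of_injective hp.injective,
    infinite_range_of_injective hq.injective, disjoint_range_of_interleaved hpq hqp,
    fun n => ⋃ t ≥ n, V t, fun n => isOpen_biUnion fun t _ => hVo t, ?_, ?_⟩
  · rintro n _ ⟨i, rfl⟩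
    refine mem_biUnion (Nat.right_le_pair i n) ?_
    simpa using hVe (Nat.pair i n)
  · rintro x ⟨hxS, hxU⟩
    have hfreq : ∃ᶠ t in Filter.atTop, x ∈ V t ∩ S :=
      Filter.frequently_atTop.2 fun n => by simpa [hxS] using mem_iInter.1 hxU n
    exact ⟨infinite_inter_range_of_frequently hp (hfreq.mono fun t ht => (hV t ht).1),
      infinite_inter_range_of_frequently hq (hfreq.mono fun t ht => (hV t ht).2)⟩

end ContinuousOn

theorem stmt9_general (κ : Cardinal) (hκ : Cardinal.aleph0 < κ.ord.cof)
    (X : Set (ℕ → Bool))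
    (hconc : κ ≤ Cardinal.mk ↥(X ∪ FinS) ∧
      ∀ U : Set (ℕ → Bool), IsOpen U → FinS ⊆ U →
        Cardinal.mk ↥((X ∪ FinS) \ U) < κ)
    (φ : (ℕ → Bool) → (ℕ → Bool)) (hφ : ContinuousOn φ (X ∪ FinS))
    (hrange : ∀ x ∈ X ∪ FinS, {k | φ x k = true}.Infinite) :
    ∃ A ⊆ X, Cardinal.mk A < κ ∧
      ∃ a b : Set ℕ, a.Infinite ∧ b.Infinite ∧ Disjoint a b ∧
        ∀ x ∈ (X \ A) ∪ FinS,
          ({k | φ x k = true} ∩ a).Infinite ∧ ({k | φ x k = true} ∩ b).Infinite := by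
  obtain ⟨e, he⟩ := finS_countable.exists_eq_range ⟨fun _ => false, by simp [FinS]⟩
  have heS : ∀ i, e i ∈ X ∪ FinS := fun i => Or.inr (he ▸ mem_range_self i)
  obtain ⟨a, b, ha, hb, hab, U, hUo, heU, hgood⟩ :=
    hφ.exists_disjoint_infinite_on_iInter e heS fun i => hrange _ (heS i)
  refine ⟨X \ ⋂ n, U n, sdiff_subset, ?_, a, b, ha, hb, hab, ?_⟩
  · exact (mk_le_mk_of_subset (sdiff_subset_sdiff_left subset_union_left)).trans_lt
      (mk_diff_iInter_lt hκ hconc.2 hUo (he ▸ heU))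
  · rintro x (⟨hxX, hxA⟩ | hxe)
    · exact hgood x ⟨Or.inl hxX, by_contra fun h => hxA ⟨hxX, h⟩⟩
    · exact hgood x ⟨Or.inr hxe, mem_iInter.2 fun n => heU n (he ▸ hxe)⟩

/-- if `X ∪ Fin` is κ-concentrated on `Fin` (κ of uncountable
cofinality) and `φ : X ∪ Fin → [ω]^ω` is continuous, then for some `A ⊆ X` with
`|A| < κ` there are disjoint infinite `a, b ⊆ ω` such that every member of
`φ[(X ∖ A) ∪ Fin]` meets both `a` and `b` infinitely; in particular the semifilter
generated by the image is neither an ultrafilter nor all of `[ω]^ω`. -/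
theorem stmt9 (κ : Cardinal) (hκ : Cardinal.aleph0 < κ.ord.cof)
    (X : Set (ℕ → Bool)) (hX : ∀ x ∈ X, {n | x n = true}.Infinite)
    (hconc : κ ≤ Cardinal.mk ↥(X ∪ FinS) ∧
      ∀ U : Set (ℕ → Bool), IsOpen U → FinS ⊆ U →
        Cardinal.mk ↥((X ∪ FinS) \ U) < κ)
    (φ : (ℕ → Bool) → (ℕ → Bool)) (hφ : ContinuousOn φ (X ∪ FinS))
    (hrange : ∀ x ∈ X ∪ FinS, {k | φ x k = true}.Infinite) :
    ∃ A ⊆ X, Cardinal.mk A < κ ∧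
      ∃ a b : Set ℕ, a.Infinite ∧ b.Infinite ∧ Disjoint a b ∧
        ∀ x ∈ (X \ A) ∪ FinS,
          ({k | φ x k = true} ∩ a).Infinite ∧ ({k | φ x k = true} ∩ b).Infinite :=
  stmt9_general κ hκ X hconc φ hφ hrange
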